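/- arXiv:1208.5872 — 3 statements merged into one kernel-verified Lean document; each statement's English description precedes it below -/
import Mathlib

section
/- For the critical push-pull ring with an odd number M of servers, the action drift matrix D has full rank M over ℝ. -/
/-!
Since every normalized drift row is a positive multiple of the unnormalized one, it suffices
that `d(u) ⬝ x = 0` for all actions `u` forces `x = 0`. In the critical case the row of
"everyone pushes" is `λ`, and switching server `k` alone to pulling kills exactly the
entries `k - 1` (as `λ - μ = 0`) and `k`. Subtracting, `y = λ * x` satisfies
`y (k - 1) + y k = 0` for every `k`, so `y` alternates in sign around the ring; an odd ring
admits no nonzero alternating function.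
-/

open MeasureTheory
open scoped ENNReal

/-- Unnormalized drift row `d(u)` of action `u` in the push-pull ring with push rates
`lam` and pull rates `mu` (`true` = push, `false` = pull). Entry `j` is: `λⱼ` if servers
`j` and `j+1` both push; `λⱼ - μⱼ` if server `j` pushes and server `j+1` pulls; `0` if
server `j` pulls and server `j+1` pushes; `-μⱼ` if both pull. -/
def ringd (M : ℕ) [NeZero M] (lam mu : Fin M → ℝ) (u : Fin M → Bool) (j : Fin M) : ℝ :=
  if u j then (if u (j + 1) then lam j else lam j - mu j)
  else (if u (j + 1) then 0 else -mu j)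

/-- The total rate `r(u) = ∑ⱼ (λⱼ if server j pushes, else μ_{j-1})` of action `u`. -/
def ringr (M : ℕ) [NeZero M] (lam mu : Fin M → ℝ) (u : Fin M → Bool) : ℝ :=
  ∑ j : Fin M, if u j then lam j else mu (j - 1)

/-- The normalized drift `Δ(u) = d(u) / r(u)` of action `u`. -/
noncomputable def ringDelta (M : ℕ) [NeZero M] (lam mu : Fin M → ℝ) (u : Fin M → Bool)
    (j : Fin M) : ℝ :=
  ringd M lam mu u j / ringr M lam mu u

/-- The `2^M × M` action drift matrix `D`, whose rows are the vectors `Δ(u)`. -/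
noncomputable def ringD (M : ℕ) [NeZero M] (lam mu : Fin M → ℝ) :
    Matrix (Fin M → Bool) (Fin M) ℝ :=
  Matrix.of fun u j => ringDelta M lam mu u j

open Matrix

theorem Matrix.rank_eq_card_of_mulVec_eq_zero {m n R : Type*} [Fintype n] [Field R]
    (A : Matrix m n R) (h : ∀ x, A *ᵥ x = 0 → x = 0) : A.rank = Fintype.card n := by
  have hinj : Function.Injective A.mulVecLin :=
    LinearMap.ker_eq_bot.mp (LinearMap.ker_eq_bot'.mpr h)
  rw [Matrix.rank, LinearMap.finrank_range_of_inj hinj, Module.finrank_fintype_fun_eq_card]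

open Fin.NatCast in
theorem Fin.eq_zero_of_add_one_eq_neg {M : ℕ} [NeZero M] (hM : Odd M) {R : Type*} [Ring R]
    [NoZeroDivisors R] [CharZero R] {y : Fin M → R} (hy : ∀ k, y (k + 1) = -y k) : y = 0 := by
  have hiter (n : ℕ) (k : Fin M) : y (k + n) = (-1) ^ n * y k := by
    induction n with
    | zero => simp
    | succ n ih => rw [Nat.cast_succ, ← add_assoc, hy, ih, pow_succ']; noncomm_ring
  funext k
  have h := hiter M k
  rw [Fin.natCast_self, add_zero, hM.neg_one_pow, neg_one_mul] at h
  exact CharZero.eq_neg_self_iff.mp h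

section PushPullRing

variable {M : ℕ} [NeZero M] {lam mu : Fin M → ℝ}

theorem ringr_pos (hlam : ∀ j, 0 < lam j) (hmu : ∀ j, 0 < mu j) (u : Fin M → Bool) :
    0 < ringr M lam mu u :=
  Finset.sum_pos (fun j _ => by split <;> simp [hlam, hmu]) Finset.univ_nonempty

theorem ringd_dotProduct_eq_zero (hlam : ∀ j, 0 < lam j) (hmu : ∀ j, 0 < mu j)
    {x : Fin M → ℝ} (hx : ringD M lam mu *ᵥ x = 0) (u : Fin M → Bool) :
    ringd M lam mu u ⬝ᵥ x = 0 := by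
  have hu : (ringd M lam mu u ⬝ᵥ x) / ringr M lam mu u = 0 := by
    refine Eq.trans ?_ (congrFun hx u)
    rw [mulVec, dotProduct, dotProduct, Finset.sum_div]
    exact Finset.sum_congr rfl fun j _ => by simp [ringD, ringDelta, div_mul_eq_mul_div]
  exact (div_eq_zero_iff.mp hu).resolve_right (ringr_pos hlam hmu u).ne'

def pushExcept (k : Fin M) : Fin M → Bool := fun i => i ≠ k

theorem ringd_allPush_sub_pushExcept (hM : (1 : Fin M) ≠ 0) (k : Fin M) :
    ringd M lam lam (fun _ => true) - ringd M lam lam (pushExcept k) =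
      Pi.single (k - 1) (lam (k - 1)) + Pi.single k (lam k) := by
  have hk : k - 1 ≠ k := by simpa [sub_eq_self] using hM
  funext j
  by_cases hjk : j = k
  · subst hjk; simp [ringd, pushExcept, hk.symm, hM]
  by_cases hj : j = k - 1
  · subst hj; simp [ringd, pushExcept, hk]
  have hj' : j + 1 ≠ k := fun h => hj (by rw [← h, add_sub_cancel_right])
  simp [ringd, pushExcept, hjk, hj, hj']

end PushPullRing

/-- For the critical push-pull ring (`μ = λ`) with an odd number `M` of servers, the
action drift matrix `D` has full rank `M` over `ℝ`. -/
theorem ring_rank_odd (M : ℕ) [NeZero M] (hM : 2 ≤ M) (hModd : Odd M)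
    (lam : Fin M → ℝ) (hlam : ∀ j, 0 < lam j) :
    (ringD M lam lam).rank = M := by
  have hone : (1 : Fin M) ≠ 0 := by simp only [ne_eq, Fin.one_eq_zero_iff]; omega
  rw [Matrix.rank_eq_card_of_mulVec_eq_zero _ fun x hx => ?_, Fintype.card_fin]
  have hd := ringd_dotProduct_eq_zero hlam hlam hx
  have hpair (k : Fin M) : lam (k - 1) * x (k - 1) + lam k * x k = 0 := by
    simpa [sub_dotProduct, add_dotProduct, single_dotProduct, hd] using
      congrArg (· ⬝ᵥ x) (ringd_allPush_sub_pushExcept (lam := lam) hone k).symm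
  have hy := Fin.eq_zero_of_add_one_eq_neg hModd (y := fun j => lam j * x j)
    fun k => eq_neg_of_add_eq_zero_right (by simpa using hpair (k + 1))
  funext j
  exact (mul_eq_zero.mp (congrFun hy j)).resolve_left (hlam j).ne'
end

section
/- For the critical two-server re-entrant line network, the vector α defined by α_k = Σ_{j=0}^{j̄(k)−1} μ_{ī(k),j}^{−1}·(−1)^{σ(ī(k),j)} is orthogonal to every row of the action drift matrix: for every pair of operations (i₁,j₁), (i₂,j₂) with σ(i₁,j₁) = 1 and σ(i₂,j₂) = 2, one has α⋅(Δ̂(i₁,j₁) + Δ̂(i₂,j₂)) = 0; in particular D·α = 0, where D is the matrix whose rows are the normalized vectors (Δ̂(i₁,j₁)+Δ̂(i₂,j₂))/‖Δ̂(i₁,j₁)+Δ̂(i₂,j₂)‖₁ over all such pairs. -/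
/-!
Write `P_i(j) = ∑_{l<j} (-1)^{σ(i,l)} / μ_{i,l}` for the signed load of the first `j`
operations of stream `i`, so that `α_{k̄(i,j)} = P_i(j)`. Pairing `α` with `Δ̂(i,j)` gives the
discrete derivative `μ_{i,j} (P_i(j+1) - P_i(j)) = (-1)^{σ(i,j)}`: for `j = 0` because
`P_i(0) = 0`, and for `j = nᵢ`, where `Δ̂` has no term `e_{k̄(i,nᵢ+1)}`, because criticality
is exactly `P_i(nᵢ+1) = 0`. A server-1 operation thus contributes `-1` and a server-2
operation `+1`.
-/

open MeasureTheory
open scoped ENNReal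

/-- `kbar`, `ibar`, `jbar` form a valid indexing of the `M` queues by the operations
`(i, j)` with `1 ≤ j ≤ nᵢ`: `kbar` is a bijection from the set of such operations onto
`Fin M` with inverse components `ibar`, `jbar`. -/
def ReIndex (S M : ℕ) (n : Fin S → ℕ) (kbar : Fin S → ℕ → Fin M)
    (ibar : Fin M → Fin S) (jbar : Fin M → ℕ) : Prop :=
  (∀ (i : Fin S) (j : ℕ), 1 ≤ j → j ≤ n i →
      ibar (kbar i j) = i ∧ jbar (kbar i j) = j) ∧
  (∀ k : Fin M, 1 ≤ jbar k ∧ jbar k ≤ n (ibar k) ∧ kbar (ibar k) (jbar k) = k)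

/-- Criticality: for each stream `i`, the total mean processing time required on server 1
equals that required on server 2, i.e.
`∑_{j ∈ C₁(i)} μᵢⱼ⁻¹ = ∑_{j ∈ C₂(i)} μᵢⱼ⁻¹` where `Cₗ(i) = {j ≤ nᵢ : σ(i,j) = ℓ}`. -/
def ReCritical (S : ℕ) (n : Fin S → ℕ) (mu : Fin S → ℕ → ℝ) (sg : Fin S → ℕ → ℕ) :
    Prop :=
  ∀ i : Fin S,
    ∑ j ∈ (Finset.range (n i + 1)).filter (fun j => sg i j = 1), (mu i j)⁻¹ =
    ∑ j ∈ (Finset.range (n i + 1)).filter (fun j => sg i j = 2), (mu i j)⁻¹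

/-- The vector `Δ̂(i, j) ∈ ℝ^M` of operation `(i, j)`:
`Δ̂(i,0) = μᵢ₀ e_{k̄(i,1)}`, `Δ̂(i,j) = μᵢⱼ (e_{k̄(i,j+1)} - e_{k̄(i,j)})` for
`1 ≤ j ≤ nᵢ - 1`, and `Δ̂(i,nᵢ) = -μᵢₙᵢ e_{k̄(i,nᵢ)}`. -/
noncomputable def reDhat (S M : ℕ) (n : Fin S → ℕ) (mu : Fin S → ℕ → ℝ)
    (kbar : Fin S → ℕ → Fin M) (i : Fin S) (j : ℕ) : Fin M → ℝ :=
  fun k =>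
    if j = 0 then (if k = kbar i 1 then mu i 0 else 0)
    else if j = n i then (if k = kbar i (n i) then -mu i (n i) else 0)
    else (if k = kbar i (j + 1) then mu i j else 0) +
         (if k = kbar i j then -mu i j else 0)

/-- The vector `α ∈ ℝ^M` with entries
`α_k = ∑_{j=0}^{j̄(k)-1} μ_{ī(k),j}⁻¹ (-1)^{σ(ī(k),j)}`. -/
noncomputable def reAlpha (S M : ℕ) (mu : Fin S → ℕ → ℝ) (sg : Fin S → ℕ → ℕ)
    (ibar : Fin M → Fin S) (jbar : Fin M → ℕ) : Fin M → ℝ :=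
  fun k => ∑ j ∈ Finset.range (jbar k), (mu (ibar k) j)⁻¹ * (-1 : ℝ) ^ sg (ibar k) j

theorem Finset.sum_mul_neg_one_pow_eq_zero {ι : Type*} {s : Finset ι} {f : ι → ℝ}
    {g : ι → ℕ} (hg : ∀ x ∈ s, g x = 1 ∨ g x = 2)
    (hbal : ∑ x ∈ s.filter (fun x => g x = 1), f x = ∑ x ∈ s.filter (fun x => g x = 2), f x) :
    ∑ x ∈ s, f x * (-1 : ℝ) ^ g x = 0 := by
  have hsplit : ∀ x ∈ s, f x * (-1 : ℝ) ^ g x =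
      (if g x = 2 then f x else 0) - (if g x = 1 then f x else 0) := by
    intro x hx
    rcases hg x hx with h | h <;> simp [h]
  rw [Finset.sum_congr rfl hsplit, Finset.sum_sub_distrib, ← Finset.sum_filter,
    ← Finset.sum_filter, hbal, sub_self]

theorem Fintype.sum_mul_ite_eq {ι R : Type*} [Fintype ι] [DecidableEq ι]
    [NonUnitalNonAssocSemiring R] (v : ι → R) (a : ι) (c : R) :
    ∑ k, v k * (if k = a then c else 0) = v a * c := by
  simp only [mul_ite, mul_zero, Finset.sum_ite_eq', Finset.mem_univ, if_true]

noncomputable def reSignedLoad {S : ℕ} (mu : Fin S → ℕ → ℝ) (sg : Fin S → ℕ → ℕ) (i : Fin S)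
    (j : ℕ) : ℝ :=
  ∑ l ∈ Finset.range j, (mu i l)⁻¹ * (-1 : ℝ) ^ sg i l

section

variable {S M : ℕ} {n : Fin S → ℕ} {mu : Fin S → ℕ → ℝ} {sg : Fin S → ℕ → ℕ}
  {kbar : Fin S → ℕ → Fin M} {ibar : Fin M → Fin S} {jbar : Fin M → ℕ}

theorem reSignedLoad_zero (i : Fin S) : reSignedLoad mu sg i 0 = 0 :=
  Finset.sum_range_zero _

theorem reSignedLoad_succ (i : Fin S) (j : ℕ) :
    reSignedLoad mu sg i (j + 1) = reSignedLoad mu sg i j + (mu i j)⁻¹ * (-1 : ℝ) ^ sg i j :=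
  Finset.sum_range_succ _ _

theorem mul_reSignedLoad_succ_sub {i : Fin S} {j : ℕ} (hmu : mu i j ≠ 0) :
    mu i j * (reSignedLoad mu sg i (j + 1) - reSignedLoad mu sg i j) = (-1 : ℝ) ^ sg i j := by
  rw [reSignedLoad_succ, add_sub_cancel_left, ← mul_assoc,
    mul_inv_cancel₀ hmu, one_mul]

theorem reSignedLoad_eq_zero_of_critical
    (hsg : ∀ (i : Fin S) (j : ℕ), j ≤ n i → sg i j = 1 ∨ sg i j = 2)
    (hcrit : ReCritical S n mu sg) (i : Fin S) :
    reSignedLoad mu sg i (n i + 1) = 0 :=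
  Finset.sum_mul_neg_one_pow_eq_zero
    (fun j hj => hsg i j (Nat.lt_succ_iff.mp (Finset.mem_range.mp hj))) (hcrit i)

theorem reAlpha_kbar (hidx : ReIndex S M n kbar ibar jbar) {i : Fin S} {j : ℕ}
    (hj₁ : 1 ≤ j) (hjn : j ≤ n i) :
    reAlpha S M mu sg ibar jbar (kbar i j) = reSignedLoad mu sg i j := by
  obtain ⟨hi, hj⟩ := hidx.1 i j hj₁ hjn
  rw [reAlpha, reSignedLoad, hi, hj]

theorem reAlpha_dotProduct_reDhat (hidx : ReIndex S M n kbar ibar jbar) {i : Fin S}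
    (hn : 1 ≤ n i) (hend : reSignedLoad mu sg i (n i + 1) = 0) {j : ℕ} (hj : j ≤ n i) :
    reAlpha S M mu sg ibar jbar ⬝ᵥ reDhat S M n mu kbar i j =
      mu i j * (reSignedLoad mu sg i (j + 1) - reSignedLoad mu sg i j) := by
  rcases Nat.eq_zero_or_pos j with rfl | hj₀
  · simp only [dotProduct, reDhat, ↓reduceIte, Fintype.sum_mul_ite_eq]
    rw [reAlpha_kbar hidx le_rfl hn, reSignedLoad_zero]
    ring
  rcases hj.eq_or_lt with rfl | hjn
  · simp only [dotProduct, reDhat, hj₀.ne', ↓reduceIte, Fintype.sum_mul_ite_eq]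
    rw [reAlpha_kbar hidx hn le_rfl, hend]
    ring
  simp only [dotProduct, reDhat, hj₀.ne', hjn.ne, ↓reduceIte, mul_add,
    Finset.sum_add_distrib, Fintype.sum_mul_ite_eq]
  rw [reAlpha_kbar hidx (by omega) hjn, reAlpha_kbar hidx hj₀ hj]
  ring

theorem reAlpha_dotProduct_reDhat_eq_neg_one_pow
    (hn : ∀ i, 1 ≤ n i) (hmu : ∀ (i : Fin S) (j : ℕ), j ≤ n i → 0 < mu i j)
    (hsg : ∀ (i : Fin S) (j : ℕ), j ≤ n i → sg i j = 1 ∨ sg i j = 2)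
    (hidx : ReIndex S M n kbar ibar jbar) (hcrit : ReCritical S n mu sg)
    {i : Fin S} {j : ℕ} (hj : j ≤ n i) :
    reAlpha S M mu sg ibar jbar ⬝ᵥ reDhat S M n mu kbar i j = (-1 : ℝ) ^ sg i j := by
  rw [reAlpha_dotProduct_reDhat hidx (hn i) (reSignedLoad_eq_zero_of_critical hsg hcrit i) hj,
    mul_reSignedLoad_succ_sub (hmu i j hj).ne']

end

theorem reentrant_alpha_orthogonal_general (S M : ℕ)
    (n : Fin S → ℕ) (hn : ∀ i, 1 ≤ n i)
    (mu : Fin S → ℕ → ℝ) (hmu : ∀ (i : Fin S) (j : ℕ), j ≤ n i → 0 < mu i j)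
    (sg : Fin S → ℕ → ℕ) (hsg : ∀ (i : Fin S) (j : ℕ), j ≤ n i → sg i j = 1 ∨ sg i j = 2)
    (kbar : Fin S → ℕ → Fin M) (ibar : Fin M → Fin S) (jbar : Fin M → ℕ)
    (hidx : ReIndex S M n kbar ibar jbar)
    (hcrit : ReCritical S n mu sg)
    (i1 : Fin S) (j1 : ℕ) (hj1 : j1 ≤ n i1) (hsg1 : sg i1 j1 = 1)
    (i2 : Fin S) (j2 : ℕ) (hj2 : j2 ≤ n i2) (hsg2 : sg i2 j2 = 2) :
    (∑ k : Fin M, reAlpha S M mu sg ibar jbar k *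
        (reDhat S M n mu kbar i1 j1 k + reDhat S M n mu kbar i2 j2 k) = 0) ∧
    (∑ k : Fin M, reAlpha S M mu sg ibar jbar k *
        ((reDhat S M n mu kbar i1 j1 k + reDhat S M n mu kbar i2 j2 k) /
          (∑ k' : Fin M,
            |reDhat S M n mu kbar i1 j1 k' + reDhat S M n mu kbar i2 j2 k'|)) = 0) := by
  have horth : reAlpha S M mu sg ibar jbar ⬝ᵥ
      (reDhat S M n mu kbar i1 j1 + reDhat S M n mu kbar i2 j2) = 0 := by
    rw [dotProduct_add,
      reAlpha_dotProduct_reDhat_eq_neg_one_pow hn hmu hsg hidx hcrit hj1,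
      reAlpha_dotProduct_reDhat_eq_neg_one_pow hn hmu hsg hidx hcrit hj2, hsg1, hsg2]
    norm_num
  refine ⟨horth, ?_⟩
  simp only [← mul_div_assoc, ← Finset.sum_div]
  exact div_eq_zero_iff.mpr (Or.inl horth)

/-- For the critical two-server re-entrant line network, the vector `α` is orthogonal to
every row of the action drift matrix: for every pair of operations `(i₁,j₁)`, `(i₂,j₂)`
with `σ(i₁,j₁) = 1` and `σ(i₂,j₂) = 2` one has `α ⬝ (Δ̂(i₁,j₁) + Δ̂(i₂,j₂)) = 0`; in
particular `D α = 0` where the rows of `D` are the normalized vectors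
`(Δ̂(i₁,j₁) + Δ̂(i₂,j₂)) / ‖Δ̂(i₁,j₁) + Δ̂(i₂,j₂)‖₁`. -/
theorem reentrant_alpha_orthogonal (S M : ℕ) (hS : 1 ≤ S)
    (n : Fin S → ℕ) (hn : ∀ i, 1 ≤ n i)
    (mu : Fin S → ℕ → ℝ) (hmu : ∀ (i : Fin S) (j : ℕ), j ≤ n i → 0 < mu i j)
    (sg : Fin S → ℕ → ℕ) (hsg : ∀ (i : Fin S) (j : ℕ), j ≤ n i → sg i j = 1 ∨ sg i j = 2)
    (hM : M = ∑ i, n i)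
    (kbar : Fin S → ℕ → Fin M) (ibar : Fin M → Fin S) (jbar : Fin M → ℕ)
    (hidx : ReIndex S M n kbar ibar jbar)
    (hcrit : ReCritical S n mu sg)
    (hserv1 : ∃ (i : Fin S) (j : ℕ), j ≤ n i ∧ sg i j = 1)
    (hserv2 : ∃ (i : Fin S) (j : ℕ), j ≤ n i ∧ sg i j = 2)
    (i1 : Fin S) (j1 : ℕ) (hj1 : j1 ≤ n i1) (hsg1 : sg i1 j1 = 1)
    (i2 : Fin S) (j2 : ℕ) (hj2 : j2 ≤ n i2) (hsg2 : sg i2 j2 = 2) :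
    (∑ k : Fin M, reAlpha S M mu sg ibar jbar k *
        (reDhat S M n mu kbar i1 j1 k + reDhat S M n mu kbar i2 j2 k) = 0) ∧
    (∑ k : Fin M, reAlpha S M mu sg ibar jbar k *
        ((reDhat S M n mu kbar i1 j1 k + reDhat S M n mu kbar i2 j2 k) /
          (∑ k' : Fin M,
            |reDhat S M n mu kbar i1 j1 k' + reDhat S M n mu kbar i2 j2 k'|)) = 0) :=
  reentrant_alpha_orthogonal_general S M n hn mu hmu sg hsg kbar ibar jbar hidx hcrit i1 j1 hj1 hsg1
    i2 j2 hj2 hsg2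
end

section
/- (Non-stabilizability of the critical two-server re-entrant line network, hitting-time form.) Let α be defined by α_k = Σ_{j=0}^{j̄(k)−1} μ_{ī(k),j}^{−1}·(−1)^{σ(ī(k),j)}. Then for every non-idling policy 𝒫, every realization (X_n) of the induced chain started at a state x ∈ ℤ₊^M, and every state y ∈ ℤ₊^M with α⋅x ≠ α⋅y, the hitting time T_y = inf{n ≥ 0 : X_n = y} has infinite expectation: E[T_y] = ∞. -/
open MeasureTheory
open scoped ENNReal

/-- The new state after operation `(i, j)` completes at state `z`: operation `(i,0)`
adds a job to queue `k̄(i,1)`; operation `(i,j)` with `1 ≤ j ≤ nᵢ - 1` moves a job from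
queue `k̄(i,j)` to queue `k̄(i,j+1)`; operation `(i,nᵢ)` removes a job from queue
`k̄(i,nᵢ)`. -/
def reMove (S M : ℕ) (n : Fin S → ℕ) (kbar : Fin S → ℕ → Fin M)
    (z : Fin M → ℕ) (i : Fin S) (j : ℕ) : Fin M → ℕ :=
  fun k =>
    if j = 0 then z k + (if k = kbar i 1 then 1 else 0)
    else if j = n i then z k - (if k = kbar i (n i) then 1 else 0)
    else z k + (if k = kbar i (j + 1) then 1 else 0) - (if k = kbar i j then 1 else 0)

/-- A non-idling policy assigns to each state `z` a pair of operations
`((i₁,j₁), (i₂,j₂))` with `σ(i₁,j₁) = 1` and `σ(i₂,j₂) = 2`, both allowed at `z`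
(an operation `(i,j)` with `j ≥ 1` requires queue `k̄(i,j)` to be nonempty). -/
def ReNonIdling (S M : ℕ) (n : Fin S → ℕ) (sg : Fin S → ℕ → ℕ)
    (kbar : Fin S → ℕ → Fin M)
    (pol : (Fin M → ℕ) → ((Fin S × ℕ) × (Fin S × ℕ))) : Prop :=
  ∀ z : Fin M → ℕ,
    sg (pol z).1.1 (pol z).1.2 = 1 ∧ sg (pol z).2.1 (pol z).2.2 = 2 ∧
    (pol z).1.2 ≤ n (pol z).1.1 ∧ (pol z).2.2 ≤ n (pol z).2.1 ∧
    ((pol z).1.2 = 0 ∨ 0 < z (kbar (pol z).1.1 (pol z).1.2)) ∧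
    ((pol z).2.2 = 0 ∨ 0 < z (kbar (pol z).2.1 (pol z).2.2))

/-- Transition probabilities of the chain induced by a policy `pol`: among the two
selected operations `(i₁,j₁)` (server 1) and `(i₂,j₂)` (server 2), operation `(i₁,j₁)`
completes first with probability `μ_{i₁j₁} / (μ_{i₁j₁} + μ_{i₂j₂})` and `(i₂,j₂)` with
probability `μ_{i₂j₂} / (μ_{i₁j₁} + μ_{i₂j₂})`. -/
noncomputable def reTrans (S M : ℕ) (n : Fin S → ℕ) (mu : Fin S → ℕ → ℝ)
    (kbar : Fin S → ℕ → Fin M)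
    (pol : (Fin M → ℕ) → ((Fin S × ℕ) × (Fin S × ℕ)))
    (z z' : Fin M → ℕ) : ℝ :=
  (if z' = reMove S M n kbar z (pol z).1.1 (pol z).1.2 then
      mu (pol z).1.1 (pol z).1.2 /
        (mu (pol z).1.1 (pol z).1.2 + mu (pol z).2.1 (pol z).2.2) else 0) +
  (if z' = reMove S M n kbar z (pol z).2.1 (pol z).2.2 then
      mu (pol z).2.1 (pol z).2.2 /
        (mu (pol z).1.1 (pol z).1.2 + mu (pol z).2.1 (pol z).2.2) else 0)

/-- `X` is a realization of a Markov chain with one-step transition probabilities `p`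
on the filtered probability space `(Ω, ℱ, μ)`. -/
def IsRealization {Ω : Type} {S : Type} [MeasurableSpace S] {mΩ : MeasurableSpace Ω}
    (μ : Measure Ω) (ℱ : Filtration ℕ mΩ) (X : ℕ → Ω → S) (p : S → S → ℝ) : Prop :=
  (∀ n, Measurable[ℱ n] (X n)) ∧
  ∀ (n : ℕ) (z z' : S), ∀ᵐ ω ∂μ, X n ω = z →
    (μ[Set.indicator {ω' | X (n + 1) ω' = z'} (fun _ => (1 : ℝ)) | ℱ n]) ω = p z z'

/-- The hitting time of the state `y` by the process `X`; `∞` if `y` is never hit. -/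
noncomputable def hitTime {Ω S : Type*} (X : ℕ → Ω → S) (y : S) (ω : Ω) : ℝ≥0∞ :=
  sInf {t : ℝ≥0∞ | ∃ n : ℕ, X n ω = y ∧ (n : ℝ≥0∞) = t}

/-! Every completion at server 1 lowers `α ⬝ z` by the mean service time `μ⁻¹` of the
operation and every completion at server 2 raises it by `μ⁻¹`; for completions that leave the
network this is criticality, `∑ⱼ μᵢⱼ⁻¹ (-1)^σ(i,j) = 0` over each whole stream. Operations
complete with probabilities proportional to `μ`, so `α ⬝ Xₙ` is a martingale with bounded
increments. Optional stopping at the hitting time `T` of `y` gives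
`α ⬝ x - α ⬝ y = E[α ⬝ Xₙ - α ⬝ y; T > n]`, and the right side is `O(n) · P(T > n)`. Hence
`P(T > n) ≥ c / (n + 1)` for some `c > 0`, and `E[T] = ∑ₙ P(T > n) = ∞`. -/

section BoundedIncrements

variable {Ω : Type*} {mΩ : MeasurableSpace Ω} {μ : Measure Ω} {V : ℕ → Ω → ℝ} {v C : ℝ}

theorem ae_abs_le_of_abs_sub_le (hV0 : ∀ᵐ ω ∂μ, V 0 ω = v)
    (hinc : ∀ n, ∀ᵐ ω ∂μ, |V (n + 1) ω - V n ω| ≤ C) (n : ℕ) :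
    ∀ᵐ ω ∂μ, |V n ω| ≤ |v| + n * C := by
  induction n with
  | zero => filter_upwards [hV0] with ω h; simp [h]
  | succ n ih =>
    filter_upwards [ih, hinc n] with ω h hstep
    have := abs_sub_abs_le_abs_sub (V (n + 1) ω) (V n ω)
    push_cast
    linarith

theorem integrable_of_abs_sub_le [IsFiniteMeasure μ] (hV : ∀ n, Measurable (V n))
    (hV0 : ∀ᵐ ω ∂μ, V 0 ω = v) (hinc : ∀ n, ∀ᵐ ω ∂μ, |V (n + 1) ω - V n ω| ≤ C) (n : ℕ) :
    Integrable (V n) μ :=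
  (integrable_const (|v| + n * C)).mono' (hV n).aestronglyMeasurable
    ((ae_abs_le_of_abs_sub_le hV0 hinc n).mono fun _ h => by rwa [Real.norm_eq_abs])

end BoundedIncrements

theorem ENNReal.tsum_ofReal_div_succ_eq_top {a : ℝ} (ha : 0 < a) :
    ∑' n : ℕ, ENNReal.ofReal (a / (n + 1)) = ⊤ := by
  by_contra h
  have hsum : Summable fun n : ℕ => a / (n + 1) :=
    (ENNReal.summable_toReal h).congr fun n => ENNReal.toReal_ofReal (by positivity)
  refine (not_summable_iff_tendsto_nat_atTop_of_nonneg (fun n => by positivity)).mpr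
    Real.tendsto_sum_range_one_div_nat_succ_atTop ?_
  simpa [div_eq_mul_inv, ha.ne'] using hsum.mul_left a⁻¹

namespace MeasureTheory.Martingale

variable {Ω : Type*} {mΩ : MeasurableSpace Ω} {μ : Measure Ω} {ℱ : Filtration ℕ mΩ}
  {V : ℕ → Ω → ℝ} {τ : Ω → WithTop ℕ} {v c C : ℝ}

theorem integral_stoppedValue_min_eq [IsFiniteMeasure μ] (hV : Martingale V ℱ μ)
    (hτ : IsStoppingTime ℱ τ) (n : ℕ) :
    ∫ ω, stoppedValue V (fun ω => min (τ ω) n) ω ∂μ = ∫ ω, V 0 ω ∂μ := by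
  have hmono : ∀ {W : ℕ → Ω → ℝ}, Martingale W ℱ μ →
      ∫ ω, W 0 ω ∂μ ≤ ∫ ω, stoppedValue W (fun ω => min (τ ω) n) ω ∂μ := fun hW =>
    hW.submartingale.expected_stoppedValue_mono (isStoppingTime_const ℱ 0) (hτ.min_const n)
      (fun _ => bot_le) (fun _ => min_le_right _ _)
  refine le_antisymm ?_ (hmono hV)
  simpa [stoppedValue, integral_neg] using hmono hV.neg

theorem abs_sub_le_mul_measureReal_lt [IsProbabilityMeasure μ] (hV : Martingale V ℱ μ)
    (hV0 : ∀ᵐ ω ∂μ, V 0 ω = v) (hinc : ∀ n, ∀ᵐ ω ∂μ, |V (n + 1) ω - V n ω| ≤ C)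
    (hτ : IsStoppingTime ℱ τ) (hτc : ∀ ω, τ ω ≠ ⊤ → stoppedValue V τ ω = c) (n : ℕ) :
    |v - c| ≤ (|v| + n * C + |c|) * μ.real {ω | (n : WithTop ℕ) < τ ω} := by
  have hG : MeasurableSet {ω | (n : WithTop ℕ) < τ ω} := ℱ.le n _ (hτ.measurableSet_gt n)
  have hW_in : ∀ ω, (n : WithTop ℕ) < τ ω → stoppedValue V (fun ω => min (τ ω) n) ω = V n ω :=
    fun ω hω => by simp only [stoppedValue, min_eq_right hω.le]; rfl
  have hW_out : ∀ ω, ¬ (n : WithTop ℕ) < τ ω → stoppedValue V (fun ω => min (τ ω) n) ω = c :=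
    fun ω hω => by
      have hle : τ ω ≤ n := not_lt.mp hω
      rw [← hτc ω (ne_top_of_le_ne_top (by simp) hle)]
      simp only [stoppedValue, min_eq_left hle]
  have hWint : Integrable (stoppedValue V fun ω => min (τ ω) n) μ :=
    hV.submartingale.integrable_stoppedValue (hτ.min_const n) fun ω => min_le_right _ _
  have hW : Integrable (fun ω => stoppedValue V (fun ω => min (τ ω) n) ω - c) μ :=
    hWint.sub (integrable_const c)
  have hsplit : v - c = ∫ ω in {ω | (n : WithTop ℕ) < τ ω}, (V n ω - c) ∂μ := by
    have := integral_add_compl hG hW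
    rw [setIntegral_congr_fun (g := fun _ => 0) hG.compl
        (fun ω hω => by simp [hW_out ω hω]),
      setIntegral_congr_fun (g := fun ω => V n ω - c) hG (fun ω hω => by simp [hW_in ω hω]),
      integral_sub hWint (integrable_const c), integral_stoppedValue_min_eq hV hτ,
      integral_congr_ae hV0] at this
    simpa using this.symm
  rw [hsplit, ← Real.norm_eq_abs]
  refine norm_setIntegral_le_of_norm_le_const_ae (measure_lt_top μ _) (ae_restrict_of_ae ?_)
  filter_upwards [ae_abs_le_of_abs_sub_le hV0 hinc n] with ω h
  rw [Real.norm_eq_abs]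
  linarith [abs_sub (V n ω) c]

theorem tsum_measure_lt_eq_top [IsProbabilityMeasure μ] (hV : Martingale V ℱ μ)
    (hV0 : ∀ᵐ ω ∂μ, V 0 ω = v) (hinc : ∀ n, ∀ᵐ ω ∂μ, |V (n + 1) ω - V n ω| ≤ C)
    (hτ : IsStoppingTime ℱ τ) (hτc : ∀ ω, τ ω ≠ ⊤ → stoppedValue V τ ω = c) (hvc : v ≠ c) :
    ∑' n : ℕ, μ {ω | (n : WithTop ℕ) < τ ω} = ⊤ := by
  obtain ⟨ω, hω⟩ := (hinc 0).exists
  have hC : 0 ≤ C := (abs_nonneg _).trans hω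
  set K := |v| + |c| + C
  have hvc' : 0 < |v - c| := abs_pos.mpr (sub_ne_zero.mpr hvc)
  have hK : 0 < K := by linarith [abs_sub v c]
  have hd : 0 < |v - c| / K := div_pos hvc' hK
  refine top_le_iff.mp ((ENNReal.tsum_ofReal_div_succ_eq_top hd).symm.le.trans
    (ENNReal.tsum_le_tsum fun n => ?_))
  rw [← ofReal_measureReal (measure_ne_top μ _)]
  refine ENNReal.ofReal_le_ofReal ?_
  rw [div_div, div_le_iff₀ (by positivity), mul_comm]
  refine (abs_sub_le_mul_measureReal_lt hV hV0 hinc hτ hτc n).trans ?_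
  gcongr
  nlinarith [abs_nonneg v, abs_nonneg c, (n.cast_nonneg : (0 : ℝ) ≤ n)]

end MeasureTheory.Martingale

namespace IsRealization

variable {Ω St : Type} [MeasurableSpace St] {mΩ : MeasurableSpace Ω}
  {μ : Measure Ω} {ℱ : Filtration ℕ mΩ} {X : ℕ → Ω → St} {p : St → St → ℝ}

theorem measurable (hX : IsRealization μ ℱ X p) (n : ℕ) : Measurable (X n) :=
  (hX.1 n).mono (ℱ.le n) le_rfl

variable [MeasurableSingletonClass St]

theorem measure_inter_succ_eq [IsFiniteMeasure μ] (hX : IsRealization μ ℱ X p) {n : ℕ}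
    {z z' : St} (hp : 0 ≤ p z z') {A : Set Ω} (hA : MeasurableSet[ℱ n] A)
    (hAz : A ⊆ {ω | X n ω = z}) :
    μ (A ∩ {ω | X (n + 1) ω = z'}) = ENNReal.ofReal (p z z') * μ A := by
  have hB : MeasurableSet {ω | X (n + 1) ω = z'} :=
    hX.measurable (n + 1) (measurableSet_singleton z')
  have h := setIntegral_condExp (ℱ.le n)
    ((integrable_const (1 : ℝ)).indicator hB : Integrable _ μ) hA
  rw [setIntegral_congr_ae (ℱ.le n A hA) ((hX.2 n z z').mono fun ω hω hωA => hω (hAz hωA)),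
    setIntegral_indicator hB] at h
  simp only [setIntegral_const, smul_eq_mul, mul_one] at h
  rw [← ENNReal.ofReal_toReal (measure_ne_top μ (A ∩ _)), ← measureReal_def, ← h,
    ENNReal.ofReal_mul' hp, ofReal_measureReal (measure_ne_top μ A), mul_comm]

variable [Countable St]

theorem map_restrict_eq [IsFiniteMeasure μ] (hX : IsRealization μ ℱ X p) {n : ℕ} {z : St}
    {T : Finset St} (hp : ∀ z', 0 ≤ p z z') (hT : ∀ z' ∉ T, p z z' = 0) {A : Set Ω}
    (hA : MeasurableSet[ℱ n] A) (hAz : A ⊆ {ω | X n ω = z}) :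
    (μ.restrict A).map (X (n + 1)) =
      ∑ z' ∈ T, (ENNReal.ofReal (p z z') * μ A) • Measure.dirac z' := by
  refine Measure.ext_of_singleton fun z' => ?_
  rw [Measure.map_apply (hX.measurable _) (measurableSet_singleton z'),
    Measure.restrict_apply (hX.measurable _ (measurableSet_singleton z')), Set.inter_comm,
    Measure.coe_finsetSum, Finset.sum_apply]
  simp only [Measure.smul_apply, smul_eq_mul]
  rw [show X (n + 1) ⁻¹' {z'} = {ω | X (n + 1) ω = z'} from rfl,
    hX.measure_inter_succ_eq (hp z') hA hAz]
  by_cases h : z' ∈ T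
  · rw [Finset.sum_eq_single_of_mem z' h fun x _ hx => by simp [hx]]
    simp
  · rw [Finset.sum_eq_zero fun x hx => by simp [ne_of_mem_of_not_mem hx h], hT z' h]
    simp

theorem setIntegral_comp_succ [IsFiniteMeasure μ] (hX : IsRealization μ ℱ X p) {n : ℕ} {z : St}
    {T : Finset St} (hp : ∀ z', 0 ≤ p z z') (hT : ∀ z' ∉ T, p z z' = 0) {A : Set Ω}
    (hA : MeasurableSet[ℱ n] A) (hAz : A ⊆ {ω | X n ω = z}) (g : St → ℝ) :
    ∫ ω in A, g (X (n + 1) ω) ∂μ = μ.real A * ∑ z' ∈ T, p z z' * g z' := by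
  rw [← integral_map (hX.measurable _).aemeasurable
      (measurable_of_countable g).aestronglyMeasurable, hX.map_restrict_eq hp hT hA hAz,
    integral_finsetSum_measure fun z' _ =>
      (integrable_dirac enorm_lt_top).smul_measure (by finiteness),
    Finset.mul_sum]
  refine Finset.sum_congr rfl fun z' _ => ?_
  rw [integral_smul_measure, integral_dirac, ENNReal.toReal_mul, ENNReal.toReal_ofReal (hp z'),
    smul_eq_mul, measureReal_def]
  ring

theorem ae_mem_succ [IsFiniteMeasure μ] (hX : IsRealization μ ℱ X p) {T : St → Finset St}
    (hp : ∀ z z', 0 ≤ p z z') (hT : ∀ z, ∀ z' ∉ T z, p z z' = 0) (n : ℕ) :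
    ∀ᵐ ω ∂μ, X (n + 1) ω ∈ T (X n ω) := by
  have hz : ∀ z, ∀ᵐ ω ∂μ, X n ω = z → X (n + 1) ω ∈ T z := fun z => by
    have hA := hX.1 n (measurableSet_singleton z)
    have h := congrArg (· ((T z : Set St)ᶜ)) (hX.map_restrict_eq (hp z) (hT z) hA subset_rfl)
    simp only [Measure.map_apply (hX.measurable _) (T z).measurableSet.compl,
      Measure.restrict_apply (hX.measurable _ (T z).measurableSet.compl), Measure.coe_finsetSum,
      Finset.sum_apply, Measure.smul_apply] at h
    rw [Finset.sum_eq_zero fun z' hz' => by simp [hz']] at h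
    filter_upwards [measure_eq_zero_iff_ae_notMem.mp h] with ω hω hωz
    simpa [hωz] using hω
  filter_upwards [ae_all_iff.mpr hz] with ω hω using hω (X n ω) rfl

theorem ae_abs_comp_succ_sub_le [IsFiniteMeasure μ] (hX : IsRealization μ ℱ X p)
    {T : St → Finset St} (hp : ∀ z z', 0 ≤ p z z') (hT : ∀ z, ∀ z' ∉ T z, p z z' = 0)
    {f : St → ℝ} {C : ℝ} (hC : ∀ z, ∀ z' ∈ T z, |f z' - f z| ≤ C) (n : ℕ) :
    ∀ᵐ ω ∂μ, |f (X (n + 1) ω) - f (X n ω)| ≤ C :=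
  (hX.ae_mem_succ hp hT n).mono fun _ hω => hC _ _ hω

theorem martingale_comp [IsFiniteMeasure μ] (hX : IsRealization μ ℱ X p) {x : St}
    (hX0 : ∀ᵐ ω ∂μ, X 0 ω = x) {T : St → Finset St} (hp : ∀ z z', 0 ≤ p z z')
    (hT : ∀ z, ∀ z' ∉ T z, p z z' = 0) {f : St → ℝ} (hf : ∀ z, ∑ z' ∈ T z, p z z' * f z' = f z)
    {C : ℝ} (hC : ∀ z, ∀ z' ∈ T z, |f z' - f z| ≤ C) :
    Martingale (fun n ω => f (X n ω)) ℱ μ := by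
  have hfX : ∀ n, Measurable[ℱ n] fun ω => f (X n ω) := fun n =>
    (measurable_of_countable f).comp (hX.1 n)
  have hint : ∀ n, Integrable (fun ω => f (X n ω)) μ :=
    integrable_of_abs_sub_le (fun n => (hfX n).mono (ℱ.le n) le_rfl)
      (hX0.mono fun ω h => by rw [h]) (hX.ae_abs_comp_succ_sub_le hp hT hC)
  refine martingale_of_setIntegral_eq_succ (fun n => (hfX n).stronglyMeasurable) hint
    fun n s hs => ?_
  have hpiece : ∀ z, ∫ ω in s ∩ {ω | X n ω = z}, f (X n ω) ∂μ =
      ∫ ω in s ∩ {ω | X n ω = z}, f (X (n + 1) ω) ∂μ := fun z => by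
    have hA : MeasurableSet[ℱ n] (s ∩ {ω | X n ω = z}) :=
      hs.inter (hX.1 n (measurableSet_singleton z))
    rw [hX.setIntegral_comp_succ (hp z) (hT z) hA Set.inter_subset_right, hf,
      setIntegral_congr_fun (ℱ.le n _ hA) fun ω hω => congrArg f hω.2, setIntegral_const,
      smul_eq_mul]
  have hs_eq : s = ⋃ z, s ∩ {ω | X n ω = z} := by ext ω; simp
  have hm : ∀ z, MeasurableSet (s ∩ {ω | X n ω = z}) := fun z =>
    ℱ.le n _ (hs.inter (hX.1 n (measurableSet_singleton z)))
  have hd : Pairwise (Function.onFun Disjoint fun z => s ∩ {ω | X n ω = z}) := fun z z' hzz' =>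
    Set.disjoint_left.mpr fun ω h h' => hzz' (h.2.symm.trans h'.2)
  rw [hs_eq, integral_iUnion hm hd (hint n).integrableOn,
    integral_iUnion hm hd (hint (n + 1)).integrableOn]
  exact tsum_congr hpiece

end IsRealization

theorem tsum_indicator_lt_hittingAfter_le_hitTime {Ω St : Type*} (X : ℕ → Ω → St) (y : St)
    (ω : Ω) :
    ∑' n : ℕ, {ω | (n : WithTop ℕ) < hittingAfter X {y} 0 ω}.indicator (1 : Ω → ℝ≥0∞) ω ≤
      hitTime X y ω := by
  refine ENNReal.tsum_le_of_sum_range_le fun N => le_sInf ?_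
  rintro _ ⟨m, hm, rfl⟩
  have hτm : hittingAfter X {y} 0 ω ≤ m := hittingAfter_le_of_mem (Nat.zero_le m) hm
  refine (Finset.sum_le_sum_of_ne_zero (t := Finset.range m) fun n _ hn =>
    Finset.mem_range.mpr (WithTop.coe_lt_coe.mp
      ((Set.mem_of_indicator_ne_zero hn).trans_le hτm))).trans ?_
  calc _ ≤ ∑ _ ∈ Finset.range m, (1 : ℝ≥0∞) :=
        Finset.sum_le_sum fun _ _ => Set.indicator_le_self' (by simp) ω
    _ = m := by simp

theorem tsum_measure_lt_hittingAfter_le_lintegral_hitTime {Ω St : Type*} [MeasurableSpace St]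
    {mΩ : MeasurableSpace Ω} {μ : Measure Ω} {ℱ : Filtration ℕ mΩ} {X : ℕ → Ω → St} {y : St}
    (hτ : IsStoppingTime ℱ (hittingAfter X {y} 0)) :
    ∑' n : ℕ, μ {ω | (n : WithTop ℕ) < hittingAfter X {y} 0 ω} ≤ ∫⁻ ω, hitTime X y ω ∂μ := by
  have hG : ∀ n : ℕ, MeasurableSet {ω | (n : WithTop ℕ) < hittingAfter X {y} 0 ω} :=
    fun n => ℱ.le n _ (hτ.measurableSet_gt n)
  refine le_of_eq_of_le ?_ (lintegral_mono (tsum_indicator_lt_hittingAfter_le_hitTime X y))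
  rw [lintegral_tsum fun n => (measurable_one.indicator (hG n)).aemeasurable]
  simp [lintegral_indicator_one (hG _)]

section Network

variable {S M : ℕ} {n : Fin S → ℕ} {mu : Fin S → ℕ → ℝ} {sg : Fin S → ℕ → ℕ}
  {kbar : Fin S → ℕ → Fin M} {ibar : Fin M → Fin S} {jbar : Fin M → ℕ}

/-- Stages `0` (arrivals) and `nᵢ + 1` (departures) have no queue and get the zero vector, so
that operation `(i, j)` moves the state by `reQueueVec i (j + 1) - reQueueVec i j` for every
`j ≤ nᵢ`. -/
def reQueueVec (n : Fin S → ℕ) (kbar : Fin S → ℕ → Fin M) (i : Fin S) (j : ℕ) : Fin M → ℝ :=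
  fun k => if 1 ≤ j ∧ j ≤ n i ∧ k = kbar i j then 1 else 0

theorem ReIndex.kbar_ne (hidx : ReIndex S M n kbar ibar jbar) {i : Fin S} {j : ℕ} (hj : 1 ≤ j)
    (hjn : j + 1 ≤ n i) : kbar i (j + 1) ≠ kbar i j := fun h => by
  have h1 := (hidx.1 i (j + 1) (by omega) hjn).2
  rw [h, (hidx.1 i j hj (by omega)).2] at h1
  omega

theorem cast_reMove (hn : ∀ i, 1 ≤ n i) (hidx : ReIndex S M n kbar ibar jbar) {z : Fin M → ℕ}
    {i : Fin S} {j : ℕ} (hj : j ≤ n i) (hz : j = 0 ∨ 0 < z (kbar i j)) (k : Fin M) :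
    (reMove S M n kbar z i j k : ℝ) =
      z k + reQueueVec n kbar i (j + 1) k - reQueueVec n kbar i j k := by
  unfold reMove reQueueVec
  rcases Nat.eq_zero_or_pos j with rfl | hj0
  · by_cases hk : k = kbar i 1 <;> simp [hk, hn i]
  have hzk : 1 ≤ z (kbar i j) := hz.resolve_left hj0.ne'
  rcases hj.eq_or_lt with rfl | hjn
  · by_cases hk : k = kbar i (n i)
    · subst hk; simp [hj0.ne', hzk]
    · simp [hk, hj0.ne']
  · have hne := hidx.kbar_ne hj0 hjn
    by_cases hk : k = kbar i j
    · subst hk; simp [hj0.ne', hjn.ne, hne.symm, hzk, hj, hjn, Nat.one_le_iff_ne_zero]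
    · by_cases hk' : k = kbar i (j + 1) <;> simp [hk, hk', hj0.ne', hjn.ne, hjn, hne]

theorem ReCritical.sum_inv_mul_neg_one_pow_eq_zero (hcrit : ReCritical S n mu sg)
    (hsg : ∀ (i : Fin S) (j : ℕ), j ≤ n i → sg i j = 1 ∨ sg i j = 2) (i : Fin S) :
    ∑ j ∈ Finset.range (n i + 1), (mu i j)⁻¹ * (-1 : ℝ) ^ sg i j = 0 := by
  have hfilter : (Finset.range (n i + 1)).filter (fun j => ¬ sg i j = 1) =
      (Finset.range (n i + 1)).filter (fun j => sg i j = 2) :=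
    Finset.filter_congr fun j hj => by
      rcases hsg i j (Nat.lt_succ_iff.mp (Finset.mem_range.mp hj)) with h | h <;> simp [h]
  have h1 : ∑ j ∈ (Finset.range (n i + 1)).filter (fun j => sg i j = 1),
      (mu i j)⁻¹ * (-1 : ℝ) ^ sg i j =
      -∑ j ∈ (Finset.range (n i + 1)).filter (fun j => sg i j = 1), (mu i j)⁻¹ := by
    rw [← Finset.sum_neg_distrib]
    exact Finset.sum_congr rfl fun j hj => by simp [(Finset.mem_filter.mp hj).2]
  have h2 : ∑ j ∈ (Finset.range (n i + 1)).filter (fun j => sg i j = 2),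
      (mu i j)⁻¹ * (-1 : ℝ) ^ sg i j =
      ∑ j ∈ (Finset.range (n i + 1)).filter (fun j => sg i j = 2), (mu i j)⁻¹ :=
    Finset.sum_congr rfl fun j hj => by simp [(Finset.mem_filter.mp hj).2]
  rw [← Finset.sum_filter_add_sum_filter_not _ (fun j => sg i j = 1), hfilter, h1, h2, hcrit i,
    neg_add_cancel]

theorem sum_reAlpha_mul_reQueueVec (hidx : ReIndex S M n kbar ibar jbar)
    (hcrit : ReCritical S n mu sg) (hsg : ∀ (i : Fin S) (j : ℕ), j ≤ n i → sg i j = 1 ∨ sg i j = 2)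
    {i : Fin S} {j : ℕ} (hj : j ≤ n i + 1) :
    ∑ k, reAlpha S M mu sg ibar jbar k * reQueueVec n kbar i j k =
      ∑ j' ∈ Finset.range j, (mu i j')⁻¹ * (-1 : ℝ) ^ sg i j' := by
  simp only [reQueueVec, mul_ite, mul_one, mul_zero]
  by_cases hjq : 1 ≤ j ∧ j ≤ n i
  · obtain ⟨hi, hj'⟩ := hidx.1 i j hjq.1 hjq.2
    simp [hjq, reAlpha, hi, hj']
  · rw [Finset.sum_eq_zero fun k _ => if_neg fun h => hjq ⟨h.1, h.2.1⟩]
    rcases (show j = 0 ∨ j = n i + 1 by omega) with rfl | rfl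
    · simp
    · exact (hcrit.sum_inv_mul_neg_one_pow_eq_zero hsg i).symm

noncomputable def reAlphaDot (S M : ℕ) (mu : Fin S → ℕ → ℝ) (sg : Fin S → ℕ → ℕ)
    (ibar : Fin M → Fin S) (jbar : Fin M → ℕ) (z : Fin M → ℕ) : ℝ :=
  ∑ k, reAlpha S M mu sg ibar jbar k * (z k : ℝ)

theorem reAlphaDot_reMove (hn : ∀ i, 1 ≤ n i) (hidx : ReIndex S M n kbar ibar jbar)
    (hcrit : ReCritical S n mu sg) (hsg : ∀ (i : Fin S) (j : ℕ), j ≤ n i → sg i j = 1 ∨ sg i j = 2)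
    {z : Fin M → ℕ} {i : Fin S} {j : ℕ} (hj : j ≤ n i) (hz : j = 0 ∨ 0 < z (kbar i j)) :
    reAlphaDot S M mu sg ibar jbar (reMove S M n kbar z i j) =
      reAlphaDot S M mu sg ibar jbar z + (mu i j)⁻¹ * (-1 : ℝ) ^ sg i j := by
  simp only [reAlphaDot, cast_reMove hn hidx hj hz, mul_sub, mul_add, Finset.sum_sub_distrib,
    Finset.sum_add_distrib, sum_reAlpha_mul_reQueueVec hidx hcrit hsg (Nat.succ_le_succ hj),
    sum_reAlpha_mul_reQueueVec hidx hcrit hsg (hj.trans (Nat.le_succ _)), Finset.sum_range_succ]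
  ring

theorem inv_le_sum_inv (hmu : ∀ (i : Fin S) (j : ℕ), j ≤ n i → 0 < mu i j) {i : Fin S} {j : ℕ}
    (hj : j ≤ n i) : (mu i j)⁻¹ ≤ ∑ i, ∑ j ∈ Finset.range (n i + 1), (mu i j)⁻¹ := by
  have hnonneg : ∀ i, ∀ j ∈ Finset.range (n i + 1), 0 ≤ (mu i j)⁻¹ := fun i j hj =>
    (inv_pos.mpr (hmu i j (Nat.lt_succ_iff.mp (Finset.mem_range.mp hj)))).le
  calc (mu i j)⁻¹ ≤ ∑ j ∈ Finset.range (n i + 1), (mu i j)⁻¹ :=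
        Finset.single_le_sum (hnonneg i) (Finset.mem_range.mpr (Nat.lt_succ_of_le hj))
    _ ≤ _ := Finset.single_le_sum (fun i _ => Finset.sum_nonneg (hnonneg i)) (Finset.mem_univ i)

variable {pol : (Fin M → ℕ) → ((Fin S × ℕ) × (Fin S × ℕ))}

def reTargets (n : Fin S → ℕ) (kbar : Fin S → ℕ → Fin M)
    (pol : (Fin M → ℕ) → ((Fin S × ℕ) × (Fin S × ℕ))) (z : Fin M → ℕ) : Finset (Fin M → ℕ) :=
  {reMove S M n kbar z (pol z).1.1 (pol z).1.2, reMove S M n kbar z (pol z).2.1 (pol z).2.2}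

theorem reTrans_nonneg (hmu : ∀ (i : Fin S) (j : ℕ), j ≤ n i → 0 < mu i j)
    (hpol : ReNonIdling S M n sg kbar pol) (z z' : Fin M → ℕ) :
    0 ≤ reTrans S M n mu kbar pol z z' := by
  obtain ⟨-, -, hj₁, hj₂, -, -⟩ := hpol z
  have := hmu _ _ hj₁
  have := hmu _ _ hj₂
  unfold reTrans
  split_ifs <;> positivity

theorem reTrans_eq_zero_of_notMem {z z' : Fin M → ℕ} (hz' : z' ∉ reTargets n kbar pol z) :
    reTrans S M n mu kbar pol z z' = 0 := by
  simp only [reTargets, Finset.mem_insert, Finset.mem_singleton, not_or] at hz'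
  simp [reTrans, hz'.1, hz'.2]

theorem ReNonIdling.reAlphaDot_reMove_fst (hpol : ReNonIdling S M n sg kbar pol)
    (hn : ∀ i, 1 ≤ n i) (hidx : ReIndex S M n kbar ibar jbar) (hcrit : ReCritical S n mu sg)
    (hsg : ∀ (i : Fin S) (j : ℕ), j ≤ n i → sg i j = 1 ∨ sg i j = 2) (z : Fin M → ℕ) :
    reAlphaDot S M mu sg ibar jbar (reMove S M n kbar z (pol z).1.1 (pol z).1.2) =
      reAlphaDot S M mu sg ibar jbar z - (mu (pol z).1.1 (pol z).1.2)⁻¹ := by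
  obtain ⟨hσ, -, hj, -, hz, -⟩ := hpol z
  rw [reAlphaDot_reMove hn hidx hcrit hsg hj hz, hσ]
  ring

theorem ReNonIdling.reAlphaDot_reMove_snd (hpol : ReNonIdling S M n sg kbar pol)
    (hn : ∀ i, 1 ≤ n i) (hidx : ReIndex S M n kbar ibar jbar) (hcrit : ReCritical S n mu sg)
    (hsg : ∀ (i : Fin S) (j : ℕ), j ≤ n i → sg i j = 1 ∨ sg i j = 2) (z : Fin M → ℕ) :
    reAlphaDot S M mu sg ibar jbar (reMove S M n kbar z (pol z).2.1 (pol z).2.2) =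
      reAlphaDot S M mu sg ibar jbar z + (mu (pol z).2.1 (pol z).2.2)⁻¹ := by
  obtain ⟨-, hσ, -, hj, -, hz⟩ := hpol z
  rw [reAlphaDot_reMove hn hidx hcrit hsg hj hz, hσ]
  ring

theorem sum_reTrans_mul_reAlphaDot (hmu : ∀ (i : Fin S) (j : ℕ), j ≤ n i → 0 < mu i j)
    (hpol : ReNonIdling S M n sg kbar pol) (hn : ∀ i, 1 ≤ n i)
    (hidx : ReIndex S M n kbar ibar jbar) (hcrit : ReCritical S n mu sg)
    (hsg : ∀ (i : Fin S) (j : ℕ), j ≤ n i → sg i j = 1 ∨ sg i j = 2) (z : Fin M → ℕ) :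
    ∑ z' ∈ reTargets n kbar pol z,
      reTrans S M n mu kbar pol z z' * reAlphaDot S M mu sg ibar jbar z' =
      reAlphaDot S M mu sg ibar jbar z := by
  have h₁ := hpol.reAlphaDot_reMove_fst hn hidx hcrit hsg z
  have h₂ := hpol.reAlphaDot_reMove_snd hn hidx hcrit hsg z
  obtain ⟨-, -, hj₁, hj₂, -, -⟩ := hpol z
  have hμ₁ := hmu _ _ hj₁
  have hμ₂ := hmu _ _ hj₂
  have hne : reMove S M n kbar z (pol z).1.1 (pol z).1.2 ≠
      reMove S M n kbar z (pol z).2.1 (pol z).2.2 := fun h => by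
    have := h₁.symm.trans ((congrArg _ h).trans h₂)
    linarith [inv_pos.mpr hμ₁, inv_pos.mpr hμ₂]
  rw [reTargets, Finset.sum_pair hne, h₁, h₂]
  simp only [reTrans, if_neg hne, if_neg hne.symm, ↓reduceIte, add_zero, zero_add]
  field_simp
  ring

theorem abs_reAlphaDot_sub_le (hmu : ∀ (i : Fin S) (j : ℕ), j ≤ n i → 0 < mu i j)
    (hpol : ReNonIdling S M n sg kbar pol) (hn : ∀ i, 1 ≤ n i)
    (hidx : ReIndex S M n kbar ibar jbar) (hcrit : ReCritical S n mu sg)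
    (hsg : ∀ (i : Fin S) (j : ℕ), j ≤ n i → sg i j = 1 ∨ sg i j = 2) (z z' : Fin M → ℕ)
    (hz' : z' ∈ reTargets n kbar pol z) :
    |reAlphaDot S M mu sg ibar jbar z' - reAlphaDot S M mu sg ibar jbar z| ≤
      ∑ i, ∑ j ∈ Finset.range (n i + 1), (mu i j)⁻¹ := by
  obtain ⟨-, -, hj₁, hj₂, -, -⟩ := hpol z
  simp only [reTargets, Finset.mem_insert, Finset.mem_singleton] at hz'
  rcases hz' with rfl | rfl
  · rw [hpol.reAlphaDot_reMove_fst hn hidx hcrit hsg, sub_sub_cancel_left, abs_neg,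
      abs_of_pos (inv_pos.mpr (hmu _ _ hj₁))]
    exact inv_le_sum_inv hmu hj₁
  · rw [hpol.reAlphaDot_reMove_snd hn hidx hcrit hsg, add_sub_cancel_left,
      abs_of_pos (inv_pos.mpr (hmu _ _ hj₂))]
    exact inv_le_sum_inv hmu hj₂

end Network

theorem reentrant_hitting_time_infinite_general (S M : ℕ)
    (n : Fin S → ℕ) (hn : ∀ i, 1 ≤ n i)
    (mu : Fin S → ℕ → ℝ) (hmu : ∀ (i : Fin S) (j : ℕ), j ≤ n i → 0 < mu i j)
    (sg : Fin S → ℕ → ℕ) (hsg : ∀ (i : Fin S) (j : ℕ), j ≤ n i → sg i j = 1 ∨ sg i j = 2)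
    (kbar : Fin S → ℕ → Fin M) (ibar : Fin M → Fin S) (jbar : Fin M → ℕ)
    (hidx : ReIndex S M n kbar ibar jbar)
    (hcrit : ReCritical S n mu sg)
    (pol : (Fin M → ℕ) → ((Fin S × ℕ) × (Fin S × ℕ)))
    (hpol : ReNonIdling S M n sg kbar pol)
    {Ω : Type} {mΩ : MeasurableSpace Ω} (μ : Measure Ω) [IsProbabilityMeasure μ]
    (ℱ : Filtration ℕ mΩ) (X : ℕ → Ω → (Fin M → ℕ))
    (x : Fin M → ℕ) (hX0 : ∀ᵐ ω ∂μ, X 0 ω = x)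
    (hX : IsRealization μ ℱ X (reTrans S M n mu kbar pol))
    (y : Fin M → ℕ)
    (hxy : ∑ k : Fin M, reAlpha S M mu sg ibar jbar k * (x k : ℝ)
         ≠ ∑ k : Fin M, reAlpha S M mu sg ibar jbar k * (y k : ℝ)) :
    ∫⁻ ω, hitTime X y ω ∂μ = ⊤ := by
  have hp := reTrans_nonneg hmu hpol
  have hT : ∀ z z', z' ∉ reTargets n kbar pol z → reTrans S M n mu kbar pol z z' = 0 :=
    fun _ _ => reTrans_eq_zero_of_notMem
  have hstep := abs_reAlphaDot_sub_le hmu hpol hn hidx hcrit hsg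
  have hV := hX.martingale_comp hX0 hp hT (sum_reTrans_mul_reAlphaDot hmu hpol hn hidx hcrit hsg)
    hstep
  have hτ : IsStoppingTime ℱ (hittingAfter X {y} 0) :=
    Adapted.isStoppingTime_hittingAfter hX.1 (measurableSet_singleton y)
  have hτy : ∀ ω, hittingAfter X {y} 0 ω ≠ ⊤ →
      stoppedValue (fun n ω => reAlphaDot S M mu sg ibar jbar (X n ω)) (hittingAfter X {y} 0) ω =
        reAlphaDot S M mu sg ibar jbar y :=
    fun _ h => congrArg _ (Set.mem_singleton_iff.mp (hittingAfter_mem_set_of_ne_top h))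
  have htop := hV.tsum_measure_lt_eq_top (hX0.mono fun _ h => congrArg _ h)
    (hX.ae_abs_comp_succ_sub_le hp hT hstep) hτ hτy hxy
  exact top_le_iff.mp (htop ▸ tsum_measure_lt_hittingAfter_le_lintegral_hitTime hτ)

/-- Non-stabilizability of the critical two-server re-entrant line network, hitting-time
form: with `α_k = ∑_{j=0}^{j̄(k)-1} μ_{ī(k),j}⁻¹ (-1)^{σ(ī(k),j)}`, for every non-idling
policy, every realization of the induced chain started at `x`, and every state `y` with
`α ⬝ x ≠ α ⬝ y`, the hitting time of `y` has infinite expectation. -/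
theorem reentrant_hitting_time_infinite (S M : ℕ) (hS : 1 ≤ S)
    (n : Fin S → ℕ) (hn : ∀ i, 1 ≤ n i)
    (mu : Fin S → ℕ → ℝ) (hmu : ∀ (i : Fin S) (j : ℕ), j ≤ n i → 0 < mu i j)
    (sg : Fin S → ℕ → ℕ) (hsg : ∀ (i : Fin S) (j : ℕ), j ≤ n i → sg i j = 1 ∨ sg i j = 2)
    (hM : M = ∑ i, n i)
    (kbar : Fin S → ℕ → Fin M) (ibar : Fin M → Fin S) (jbar : Fin M → ℕ)
    (hidx : ReIndex S M n kbar ibar jbar)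
    (hcrit : ReCritical S n mu sg)
    (hserv1 : ∃ (i : Fin S) (j : ℕ), j ≤ n i ∧ sg i j = 1)
    (hserv2 : ∃ (i : Fin S) (j : ℕ), j ≤ n i ∧ sg i j = 2)
    (pol : (Fin M → ℕ) → ((Fin S × ℕ) × (Fin S × ℕ)))
    (hpol : ReNonIdling S M n sg kbar pol)
    {Ω : Type} {mΩ : MeasurableSpace Ω} (μ : Measure Ω) [IsProbabilityMeasure μ]
    (ℱ : Filtration ℕ mΩ) (X : ℕ → Ω → (Fin M → ℕ))
    (x : Fin M → ℕ) (hX0 : ∀ᵐ ω ∂μ, X 0 ω = x)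
    (hX : IsRealization μ ℱ X (reTrans S M n mu kbar pol))
    (y : Fin M → ℕ)
    (hxy : ∑ k : Fin M, reAlpha S M mu sg ibar jbar k * (x k : ℝ)
         ≠ ∑ k : Fin M, reAlpha S M mu sg ibar jbar k * (y k : ℝ)) :
    ∫⁻ ω, hitTime X y ω ∂μ = ⊤ :=
  reentrant_hitting_time_infinite_general S M n hn mu hmu sg hsg kbar ibar jbar hidx hcrit pol hpol
    μ ℱ X x hX0 hX y hxy
end
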